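/- On ℝ², the vector fields X₁ = (y,−x), X₂ = (1+x²−y², 2xy), X₃ = (2xy, 1+y²−x²) (the class P₃ ≅ so(3)) are Hamiltonian with respect to the symplectic form ω = (1+x²+y²)^{−2} dx∧dy with Hamiltonian functions h₁ = −1/(2(1+x²+y²)), h₂ = y/(1+x²+y²), h₃ = −x/(1+x²+y²), respectively (i.e. ∂h_i/∂x = −(1+x²+y²)^{−2}·X_i² and ∂h_i/∂y = (1+x²+y²)^{−2}·X_i¹). Moreover, under the Poisson bracket {g,h}_ω = (1+x²+y²)²(∂g/∂x·∂h/∂y − ∂g/∂y·∂h/∂x) these satisfy {h₁,h₂}_ω = −h₃, {h₁,h₃}_ω = h₂, and {h₂,h₃}_ω = −4h₁ − 1; hence ⟨h₁,h₂,h₃,1⟩ is closed under the Poisson bracket (a central extension of so(3)). -/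

import Mathlib

/-!
Each hᵢ is a rational function with denominator `1 + x² + y²`, so the six Hamiltonian equations
are direct quotient-rule computations. For the brackets no further differentiation is needed:
if `h`, `k` are Hamiltonian for `X`, `Y`, then `{h, k}_ω = ω(X, Y) = (X¹Y² − X²Y¹)/(1 + x² + y²)²`,
and the three identities become polynomial identities in `x, y`.
-/

namespace Stmt8

/-- Partial derivative in the x-direction. -/
noncomputable def pdx (f : ℝ × ℝ → ℝ) (p : ℝ × ℝ) : ℝ := fderiv ℝ f p (1, 0)

/-- Partial derivative in the y-direction. -/
noncomputable def pdy (f : ℝ × ℝ → ℝ) (p : ℝ × ℝ) : ℝ := fderiv ℝ f p (0, 1)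

/-- Poisson bracket induced by ω = (1+x²+y²)⁻² dx∧dy. -/
noncomputable def pbw (g h : ℝ × ℝ → ℝ) (p : ℝ × ℝ) : ℝ :=
  (1 + p.1 ^ 2 + p.2 ^ 2) ^ 2 * (pdx g p * pdy h p - pdy g p * pdx h p)

/-- Basis of the class P₃ ≅ so(3). -/
def X1 : ℝ × ℝ → ℝ × ℝ := fun p => (p.2, -p.1)
def X2 : ℝ × ℝ → ℝ × ℝ := fun p => (1 + p.1 ^ 2 - p.2 ^ 2, 2 * p.1 * p.2)
def X3 : ℝ × ℝ → ℝ × ℝ := fun p => (2 * p.1 * p.2, 1 + p.2 ^ 2 - p.1 ^ 2)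

noncomputable def h1 : ℝ × ℝ → ℝ := fun p => -(1 / (2 * (1 + p.1 ^ 2 + p.2 ^ 2)))
noncomputable def h2 : ℝ × ℝ → ℝ := fun p => p.2 / (1 + p.1 ^ 2 + p.2 ^ 2)
noncomputable def h3 : ℝ × ℝ → ℝ := fun p => -(p.1 / (1 + p.1 ^ 2 + p.2 ^ 2))

section PartialDerivatives

variable {f : ℝ × ℝ → ℝ} {p : ℝ × ℝ} {a : ℝ}

theorem hasDerivAt_pdx (hf : DifferentiableAt ℝ f p) :
    HasDerivAt (fun x => f (x, p.2)) (pdx f p) p.1 :=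
  hf.hasFDerivAt.comp_hasDerivAt p.1 ((hasDerivAt_id p.1).prodMk (hasDerivAt_const p.1 p.2))

theorem hasDerivAt_pdy (hf : DifferentiableAt ℝ f p) :
    HasDerivAt (fun y => f (p.1, y)) (pdy f p) p.2 :=
  hf.hasFDerivAt.comp_hasDerivAt p.2 ((hasDerivAt_const p.2 p.1).prodMk (hasDerivAt_id p.2))

theorem pdx_eq_of_hasDerivAt (hf : DifferentiableAt ℝ f p)
    (h : HasDerivAt (fun x => f (x, p.2)) a p.1) : pdx f p = a :=
  (hasDerivAt_pdx hf).unique h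

theorem pdy_eq_of_hasDerivAt (hf : DifferentiableAt ℝ f p)
    (h : HasDerivAt (fun y => f (p.1, y)) a p.2) : pdy f p = a :=
  (hasDerivAt_pdy hf).unique h

end PartialDerivatives

def IsHamiltonianAt (X : ℝ × ℝ → ℝ × ℝ) (h : ℝ × ℝ → ℝ) (p : ℝ × ℝ) : Prop :=
  pdx h p = -(((1 + p.1 ^ 2 + p.2 ^ 2) ^ 2)⁻¹ * (X p).2) ∧
    pdy h p = ((1 + p.1 ^ 2 + p.2 ^ 2) ^ 2)⁻¹ * (X p).1

theorem IsHamiltonianAt.pbw_eq {X Y : ℝ × ℝ → ℝ × ℝ} {h k : ℝ × ℝ → ℝ} {p : ℝ × ℝ}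
    (hX : IsHamiltonianAt X h p) (hY : IsHamiltonianAt Y k p) :
    pbw h k p = ((X p).1 * (Y p).2 - (X p).2 * (Y p).1) / (1 + p.1 ^ 2 + p.2 ^ 2) ^ 2 := by
  rw [pbw, hX.1, hX.2, hY.1, hY.2]
  field_simp
  ring

theorem hasDerivAt_one_add_sq_add_const (x c : ℝ) :
    HasDerivAt (fun x => 1 + x ^ 2 + c) (2 * x) x := by
  simpa using ((hasDerivAt_pow 2 x).const_add 1).add_const c

theorem hasDerivAt_one_add_const_add_sq (y c : ℝ) :
    HasDerivAt (fun y => 1 + c + y ^ 2) (2 * y) y := by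
  simpa using (hasDerivAt_pow 2 y).const_add (1 + c)

theorem isHamiltonianAt_h1 (p : ℝ × ℝ) : IsHamiltonianAt X1 h1 p := by
  have hd : DifferentiableAt ℝ h1 p := by unfold h1; fun_prop (disch := positivity)
  constructor
  · refine pdx_eq_of_hasDerivAt hd (HasDerivAt.congr_deriv (((hasDerivAt_const p.1 (1 : ℝ)).fun_div
      ((hasDerivAt_one_add_sq_add_const p.1 (p.2 ^ 2)).const_mul 2) (by positivity)).fun_neg) ?_)
    simp only [X1]; field_simp; ring
  · refine pdy_eq_of_hasDerivAt hd (HasDerivAt.congr_deriv (((hasDerivAt_const p.2 (1 : ℝ)).fun_div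
      ((hasDerivAt_one_add_const_add_sq p.2 (p.1 ^ 2)).const_mul 2) (by positivity)).fun_neg) ?_)
    simp only [X1]; field_simp; ring

theorem isHamiltonianAt_h2 (p : ℝ × ℝ) : IsHamiltonianAt X2 h2 p := by
  have hd : DifferentiableAt ℝ h2 p := by unfold h2; fun_prop (disch := positivity)
  constructor
  · refine pdx_eq_of_hasDerivAt hd (HasDerivAt.congr_deriv ((hasDerivAt_const p.1 p.2).fun_div
      (hasDerivAt_one_add_sq_add_const p.1 (p.2 ^ 2)) (by positivity)) ?_)
    simp only [X2]; field_simp; ring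
  · refine pdy_eq_of_hasDerivAt hd (HasDerivAt.congr_deriv ((hasDerivAt_id p.2).fun_div
      (hasDerivAt_one_add_const_add_sq p.2 (p.1 ^ 2)) (by positivity)) ?_)
    simp only [X2, id]; field_simp; ring

theorem isHamiltonianAt_h3 (p : ℝ × ℝ) : IsHamiltonianAt X3 h3 p := by
  have hd : DifferentiableAt ℝ h3 p := by unfold h3; fun_prop (disch := positivity)
  constructor
  · refine pdx_eq_of_hasDerivAt hd (HasDerivAt.congr_deriv (((hasDerivAt_id p.1).fun_div
      (hasDerivAt_one_add_sq_add_const p.1 (p.2 ^ 2)) (by positivity)).fun_neg) ?_)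
    simp only [X3, id]; field_simp; ring
  · refine pdy_eq_of_hasDerivAt hd (HasDerivAt.congr_deriv (((hasDerivAt_const p.2 p.1).fun_div
      (hasDerivAt_one_add_const_add_sq p.2 (p.1 ^ 2)) (by positivity)).fun_neg) ?_)
    simp only [X3]; field_simp; ring

/-- On ℝ², the fields X₁, X₂, X₃ of P₃ ≅ so(3) are Hamiltonian with respect to
ω = (1+x²+y²)⁻² dx∧dy with Hamiltonian functions h₁, h₂, h₃, which together with the
constant 1 close a central extension of so(3) under the induced Poisson bracket. -/
theorem stmt_8 : ∀ p : ℝ × ℝ,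
    (pdx h1 p = -(((1 + p.1 ^ 2 + p.2 ^ 2) ^ 2)⁻¹ * (X1 p).2) ∧
      pdy h1 p = ((1 + p.1 ^ 2 + p.2 ^ 2) ^ 2)⁻¹ * (X1 p).1) ∧
    (pdx h2 p = -(((1 + p.1 ^ 2 + p.2 ^ 2) ^ 2)⁻¹ * (X2 p).2) ∧
      pdy h2 p = ((1 + p.1 ^ 2 + p.2 ^ 2) ^ 2)⁻¹ * (X2 p).1) ∧
    (pdx h3 p = -(((1 + p.1 ^ 2 + p.2 ^ 2) ^ 2)⁻¹ * (X3 p).2) ∧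
      pdy h3 p = ((1 + p.1 ^ 2 + p.2 ^ 2) ^ 2)⁻¹ * (X3 p).1) ∧
    pbw h1 h2 p = -h3 p ∧ pbw h1 h3 p = h2 p ∧ pbw h2 h3 p = -4 * h1 p - 1 := by
  intro p
  have H1 := isHamiltonianAt_h1 p
  have H2 := isHamiltonianAt_h2 p
  have H3 := isHamiltonianAt_h3 p
  refine ⟨H1, H2, H3, ?_, ?_, ?_⟩
  · rw [H1.pbw_eq H2]; simp only [X1, X2, h3]; field_simp; ring
  · rw [H1.pbw_eq H3]; simp only [X1, X3, h2]; field_simp; ring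
  · rw [H2.pbw_eq H3]; simp only [X2, X3, h1]; field_simp; ring

end Stmt8
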